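/- Let (A,C,ψ) be a weak entwining structure with p and act as usual. Then for all a ∈ A and c ∈ C: (A ⊗ Δ)(p(a ⊗ c)) = Σ act(p(a ⊗ c₍₁₎) ⊗ 1_α) ⊗ c₍₂₎^α, where ψ(c₍₂₎ ⊗ 1) = Σ 1_α ⊗ c₍₂₎^α. (This expresses that the restriction of A ⊗ Δ to the image of p takes values in the balanced tensor product (Im p) ⊗_A (Im p), i.e. that A ⊗ Δ restricts to a coproduct on the A-coring Im p.) -/
import Mathlib


/-!
STATEMENT 5: For a weak entwining structure (A,C,ψ),
(A ⊗ Δ)(p(a ⊗ c)) = Σ act(p(a ⊗ c₍₁₎) ⊗ 1_α) ⊗ c₍₂₎^α,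
where ψ(c₍₂₎ ⊗ 1) = Σ 1_α ⊗ c₍₂₎^α.
-/

open TensorProduct

noncomputable section
set_option linter.unusedSectionVars false

variable {k A C : Type*} [CommRing k] [Ring A] [Algebra k A]
  [AddCommGroup C] [Module k C] [Coalgebra k C]

/-- The twisted right action `act((a' ⊗ c) ⊗ a) = (μ ⊗ C)(a' ⊗ ψ(c ⊗ a))`. -/
def act (ψ : C ⊗[k] A →ₗ[k] A ⊗[k] C) :
    (A ⊗[k] C) ⊗[k] A →ₗ[k] A ⊗[k] C :=
  LinearMap.rTensor C (LinearMap.mul' k A) ∘ₗ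
    (TensorProduct.assoc k A A C).symm.toLinearMap ∘ₗ
    LinearMap.lTensor A ψ ∘ₗ
    (TensorProduct.assoc k A C A).toLinearMap

/-- `(A ⊗ ε) : A ⊗ C → A` (composed with the canonical iso `A ⊗ k ≅ A`). -/
def epsA : A ⊗[k] C →ₗ[k] A :=
  (TensorProduct.rid k A).toLinearMap ∘ₗ
    LinearMap.lTensor A (Coalgebra.counit (R := k) (A := C))

/-- `ψ₁ : C → A ⊗ C`, `c ↦ ψ(c ⊗ 1)`. -/
def psiOne (ψ : C ⊗[k] A →ₗ[k] A ⊗[k] C) : C →ₗ[k] A ⊗[k] C :=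
  ψ ∘ₗ (TensorProduct.mk k C A).flip 1

/-- `p : A ⊗ C → A ⊗ C`, `p(a ⊗ c) = (μ ⊗ C)(a ⊗ ψ(c ⊗ 1)) = act((a ⊗ c) ⊗ 1)`. -/
def pMap (ψ : C ⊗[k] A →ₗ[k] A ⊗[k] C) : A ⊗[k] C →ₗ[k] A ⊗[k] C :=
  act ψ ∘ₗ (TensorProduct.mk k (A ⊗[k] C) A).flip 1


lemma mulA_aux (a' : A) (y : A ⊗[k] C) :
    LinearMap.rTensor C (LinearMap.mul' k A)
      ((TensorProduct.assoc k A A C).symm (a' ⊗ₜ y)) =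
    LinearMap.rTensor C (LinearMap.mulLeft k a') y := by
  induction y using TensorProduct.induction_on with
  | zero => simp
  | tmul u d => simp
  | add x y hx hy => simp [tmul_add, hx, hy]

lemma act_tmul (ψ : C ⊗[k] A →ₗ[k] A ⊗[k] C) (a' : A) (c : C) (b : A) :
    act ψ ((a' ⊗ₜ c) ⊗ₜ b) =
      LinearMap.rTensor C (LinearMap.mulLeft k a') (ψ (c ⊗ₜ b)) := by
  simp [act, mulA_aux]

lemma act_mulLeft (ψ : C ⊗[k] A →ₗ[k] A ⊗[k] C) (a b : A) (x : A ⊗[k] C) :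
    act ψ ((LinearMap.rTensor C (LinearMap.mulLeft k a) x) ⊗ₜ b) =
      LinearMap.rTensor C (LinearMap.mulLeft k a) (act ψ (x ⊗ₜ b)) := by
  induction x using TensorProduct.induction_on with
  | zero => simp
  | tmul a' c =>
      simp only [LinearMap.rTensor_tmul, act_tmul, LinearMap.mulLeft_apply]
      rw [LinearMap.mulLeft_mul, LinearMap.rTensor_comp, LinearMap.comp_apply]
  | add x y hx hy => simp [add_tmul, hx, hy]

lemma pMap_tmul (ψ : C ⊗[k] A →ₗ[k] A ⊗[k] C) (a : A) (c : C) :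
    pMap ψ (a ⊗ₜ c) =
      LinearMap.rTensor C (LinearMap.mulLeft k a) (psiOne ψ c) := by
  simp [pMap, psiOne, act_tmul]

lemma assoc_mulLeft (a : A) (z : A ⊗[k] C) (d : C) :
    LinearMap.rTensor (C ⊗[k] C) (LinearMap.mulLeft k a)
        ((TensorProduct.assoc k A C C) (z ⊗ₜ d)) =
      (TensorProduct.assoc k A C C)
        ((LinearMap.rTensor C (LinearMap.mulLeft k a) z) ⊗ₜ d) := by
  induction z using TensorProduct.induction_on with
  | zero => simp
  | tmul e f => simp
  | add x y hx hy => simp [add_tmul, hx, hy]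

theorem statement5 (ψ : C ⊗[k] A →ₗ[k] A ⊗[k] C)
    -- (i) ψ ∘ (C ⊗ μ) = (μ ⊗ C) ∘ (A ⊗ ψ) ∘ (ψ ⊗ A)
    (hmul : ∀ (c : C) (a b : A), ψ (c ⊗ₜ (a * b)) = act ψ (ψ (c ⊗ₜ a) ⊗ₜ b))
    -- (ii) (A ⊗ Δ) ∘ ψ = (ψ ⊗ C) ∘ (C ⊗ ψ) ∘ (Δ ⊗ A)
    (hcomul : LinearMap.lTensor A (Coalgebra.comul (R := k) (A := C)) ∘ₗ ψ =
      (TensorProduct.assoc k A C C).toLinearMap ∘ₗ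
        LinearMap.rTensor C ψ ∘ₗ
        (TensorProduct.assoc k C A C).symm.toLinearMap ∘ₗ
        LinearMap.lTensor C ψ ∘ₗ
        (TensorProduct.assoc k C C A).toLinearMap ∘ₗ
        LinearMap.rTensor A (Coalgebra.comul (R := k) (A := C)))
    -- (iii') Σ a_α ε(c^α) = Σ 1_α a ε(c^α)
    (hcounit' : ∀ (c : C) (a : A),
      epsA (ψ (c ⊗ₜ a)) = epsA (ψ (c ⊗ₜ (1 : A))) * a)
    -- (iv') Σ 1_α ε(c₍₁₎^α) ⊗ c₍₂₎ = Σ 1_α ⊗ c^α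
    (hcomul' : ∀ c : C,
      LinearMap.rTensor C (epsA ∘ₗ psiOne ψ)
          (Coalgebra.comul (R := k) (A := C) c) = ψ (c ⊗ₜ (1 : A))) :
    -- (A ⊗ Δ)(p(a ⊗ c)) = Σ act(p(a ⊗ c₍₁₎) ⊗ 1_α) ⊗ c₍₂₎^α
    ∀ (a : A) (c : C),
      LinearMap.lTensor A (Coalgebra.comul (R := k) (A := C))
          (pMap ψ (a ⊗ₜ c)) =
        (TensorProduct.assoc k A C C)
          (LinearMap.rTensor C
            (act ψ ∘ₗ
              LinearMap.rTensor A (pMap ψ ∘ₗ TensorProduct.mk k A C a))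
            ((TensorProduct.assoc k C A C).symm
              (LinearMap.lTensor C (psiOne ψ)
                (Coalgebra.comul (R := k) (A := C) c)))) := by
  intro a c
  have key : ∀ (c₁ : C) (u : A),
      LinearMap.rTensor C (LinearMap.mulLeft k a) (ψ (c₁ ⊗ₜ u)) =
        act ψ (pMap ψ (a ⊗ₜ c₁) ⊗ₜ u) := by
    intro c₁ u
    rw [pMap_tmul, act_mulLeft]
    have h1 : ψ (c₁ ⊗ₜ[k] u) = act ψ (ψ (c₁ ⊗ₜ (1 : A)) ⊗ₜ u) := by
      rw [← hmul, one_mul]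
    have h2 : psiOne ψ c₁ = ψ (c₁ ⊗ₜ (1 : A)) := rfl
    rw [h2, ← h1]
  have hcomm : ∀ (x : A ⊗[k] C),
      LinearMap.lTensor A (Coalgebra.comul (R := k) (A := C))
        (LinearMap.rTensor C (LinearMap.mulLeft k a) x) =
      LinearMap.rTensor (C ⊗[k] C) (LinearMap.mulLeft k a)
        (LinearMap.lTensor A (Coalgebra.comul (R := k) (A := C)) x) := by
    intro x
    induction x using TensorProduct.induction_on with
    | zero => simp
    | tmul e f => simp
    | add x y hx hy => simp [hx, hy]
  have hps : psiOne ψ c = ψ (c ⊗ₜ (1 : A)) := rfl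
  have h3 := LinearMap.congr_fun hcomul (c ⊗ₜ (1 : A))
  simp only [LinearMap.comp_apply, LinearEquiv.coe_coe, LinearMap.rTensor_tmul] at h3
  rw [pMap_tmul, hps, hcomm, h3]
  generalize Coalgebra.comul (R := k) (A := C) c = x
  induction x using TensorProduct.induction_on with
  | zero => simp
  | add x y hx hy => simp only [add_tmul, map_add, hx, hy]
  | tmul c₁ c₂ =>
    simp only [TensorProduct.assoc_tmul, LinearMap.lTensor_tmul]
    have hps2 : psiOne ψ c₂ = ψ (c₂ ⊗ₜ (1 : A)) := rfl
    rw [hps2]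
    generalize ψ (c₂ ⊗ₜ (1 : A)) = y
    induction y using TensorProduct.induction_on with
    | zero => simp
    | add y z hy hz => simp only [tmul_add, map_add, hy, hz]
    | tmul u d =>
      simp only [TensorProduct.assoc_symm_tmul, LinearMap.rTensor_tmul,
        LinearMap.lTensor_tmul, LinearMap.comp_apply, TensorProduct.mk_apply]
      rw [assoc_mulLeft, key]
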